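/- Let A = {P^A_i} and B = {P^B_j} be projective observables on ℂ^d. Then Q_F(A→B) = 0 if and only if P^A_i P^B_j = P^B_j P^A_i for all i and j. -/

import Mathlib

open scoped BigOperators ComplexOrder
open Matrix

noncomputable section

/-- A projective observable: a finite family of mutually orthogonal
self-adjoint idempotents summing to the identity. -/
def IsProjObs {d r : ℕ} (P : Fin r → Matrix (Fin d) (Fin d) ℂ) : Prop :=
  (∀ i, (P i).IsHermitian) ∧ (∀ i, P i * P i = P i) ∧
    (∀ i k, i ≠ k → P i * P k = 0) ∧ (∑ i, P i = 1)

/-- A density matrix: positive semidefinite with unit trace. -/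
def IsDensity {d : ℕ} (ρ : Matrix (Fin d) (Fin d) ℂ) : Prop :=
  ρ.PosSemidef ∧ ρ.trace = 1

/-- The measurement channel `E^A(ρ) = Σ_i P_i ρ P_i` of a projective observable. -/
def measChannel {d r : ℕ} (P : Fin r → Matrix (Fin d) (Fin d) ℂ)
    (ρ : Matrix (Fin d) (Fin d) ℂ) : Matrix (Fin d) (Fin d) ℂ :=
  ∑ i, P i * ρ * P i

/-- `p^B_ρ(j) = tr(P^B_j ρ)`. -/
def probB {d rB : ℕ} (Q : Fin rB → Matrix (Fin d) (Fin d) ℂ)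
    (ρ : Matrix (Fin d) (Fin d) ℂ) (j : Fin rB) : ℝ :=
  ((Q j * ρ).trace).re

/-- `q^{A→B}_ρ(j) = tr(P^B_j Σ_i P^A_i ρ P^A_i)`. -/
def probAB {d rA rB : ℕ} (P : Fin rA → Matrix (Fin d) (Fin d) ℂ)
    (Q : Fin rB → Matrix (Fin d) (Fin d) ℂ)
    (ρ : Matrix (Fin d) (Fin d) ℂ) (j : Fin rB) : ℝ :=
  ((Q j * measChannel P ρ).trace).re

open Classical in
/-- The positive semidefinite square root of a PSD matrix (junk value `0` otherwise). -/
noncomputable def msqrt {d : ℕ} (A : Matrix (Fin d) (Fin d) ℂ) :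
    Matrix (Fin d) (Fin d) ℂ :=
  if h : A.PosSemidef then
    (h.1.eigenvectorUnitary : Matrix (Fin d) (Fin d) ℂ) *
      Matrix.diagonal (((↑) : ℝ → ℂ) ∘ Real.sqrt ∘ h.1.eigenvalues) *
      (star h.1.eigenvectorUnitary : Matrix (Fin d) (Fin d) ℂ)
  else 0

/-- `|X| = √(Xᴴ X)`, the positive semidefinite absolute value of a matrix. -/
noncomputable def matAbs {d : ℕ} (X : Matrix (Fin d) (Fin d) ℂ) :
    Matrix (Fin d) (Fin d) ℂ :=
  msqrt (Xᴴ * X)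

/-- The quantum fidelity `F(ρ,σ) = tr √(√ρ σ √ρ)`. -/
noncomputable def qFid {d : ℕ} (ρ σ : Matrix (Fin d) (Fin d) ℂ) : ℝ :=
  ((msqrt (msqrt ρ * σ * msqrt ρ)).trace).re

/-- Variational distance `D_1(p,q) = (1/2) Σ_j |p_j − q_j|`. -/
def distL1 {rB : ℕ} (p q : Fin rB → ℝ) : ℝ := (1 / 2) * ∑ j, |p j - q j|

/-- Chebyshev distance `D_∞(p,q) = max_j |p_j − q_j|`. -/
noncomputable def distLinf {rB : ℕ} (p q : Fin rB → ℝ) : ℝ := ⨆ j, |p j - q j|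

/-- Classical fidelity `F(p,q) = Σ_j √(p_j q_j)`. -/
noncomputable def classFid {rB : ℕ} (p q : Fin rB → ℝ) : ℝ :=
  ∑ j, Real.sqrt (p j * q j)

/-- `Q_1(A→B)`. -/
noncomputable def Q1 {d rA rB : ℕ} (P : Fin rA → Matrix (Fin d) (Fin d) ℂ)
    (Q : Fin rB → Matrix (Fin d) (Fin d) ℂ) : ℝ :=
  sSup {x : ℝ | ∃ ρ, IsDensity ρ ∧ x = distL1 (probAB P Q ρ) (probB Q ρ)}

/-- `Q_∞(A→B)`. -/
noncomputable def Qinf {d rA rB : ℕ} (P : Fin rA → Matrix (Fin d) (Fin d) ℂ)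
    (Q : Fin rB → Matrix (Fin d) (Fin d) ℂ) : ℝ :=
  sSup {x : ℝ | ∃ ρ, IsDensity ρ ∧ x = distLinf (probAB P Q ρ) (probB Q ρ)}

/-- `Q_F(A→B)`. -/
noncomputable def QF {d rA rB : ℕ} (P : Fin rA → Matrix (Fin d) (Fin d) ℂ)
    (Q : Fin rB → Matrix (Fin d) (Fin d) ℂ) : ℝ :=
  sSup {x : ℝ | ∃ ρ, IsDensity ρ ∧
    x = 1 - (classFid (probAB P Q ρ) (probB Q ρ)) ^ 2}

/-- The rank-one projection `|v⟩⟨v|` onto a (unit) vector `v`. -/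
def proj {d : ℕ} (v : Fin d → ℂ) : Matrix (Fin d) (Fin d) ℂ :=
  Matrix.vecMulVec v (star v)

/-
`Q_F(A→B) = 0` says that measuring `A` never changes the statistics of `B`: for probability
vectors `1 - F(p,q) = ½ Σ_j (√p_j - √q_j)²`, so `F(p,q) = 1` only when `p = q`.
The channel `E(X) = Σ_i P_i X P_i` is self-dual for the trace pairing, so `q^{A→B}_ρ(j)` is the
expectation of `E(P^B_j)` in `ρ`, and since pure states separate Hermitian matrices the condition
becomes `E(P^B_j) = P^B_j`. Multiplying by `P_i` on the left and on the right gives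
`P_i P^B_j = P_i P^B_j P_i = P^B_j P_i`.
-/

theorem trace_mul_proj {d : ℕ} (M : Matrix (Fin d) (Fin d) ℂ) (v : Fin d → ℂ) :
    (M * proj v).trace = star v ⬝ᵥ M *ᵥ v := by
  rw [proj, mul_vecMulVec, trace_vecMulVec, dotProduct_comm]

theorem isDensity_proj {d : ℕ} {v : Fin d → ℂ} (hv : v ⬝ᵥ star v = 1) :
    IsDensity (proj v) :=
  ⟨posSemidef_vecMulVec_self_star v, by rw [proj, trace_vecMulVec, hv]⟩

theorem Matrix.IsHermitian.eq_of_forall_isDensity {d : ℕ} {M N : Matrix (Fin d) (Fin d) ℂ}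
    (hM : M.IsHermitian) (hN : N.IsHermitian)
    (h : ∀ ρ, IsDensity ρ → (M * ρ).trace.re = (N * ρ).trace.re) : M = N := by
  have hMN := hM.sub hN
  rw [← sub_eq_zero, ← hMN.eigenvalues_eq_zero_iff]
  funext i
  -- each eigenvalue of `M - N` is its expectation value in the pure state of an eigenvector
  have hunit : ⇑(hMN.eigenvectorBasis i) ⬝ᵥ star ⇑(hMN.eigenvectorBasis i) = 1 := by
    rw [← EuclideanSpace.inner_eq_star_dotProduct, inner_self_eq_norm_sq_to_K,
      hMN.eigenvectorBasis.orthonormal.1 i]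
    simp
  rw [hMN.eigenvalues_eq, ← trace_mul_proj, sub_mul, trace_sub]
  simpa [sub_eq_zero] using h _ (isDensity_proj hunit)

theorem sum_sq_sqrt_sub_sqrt {n : ℕ} {p q : Fin n → ℝ} (hp : ∀ j, 0 ≤ p j)
    (hq : ∀ j, 0 ≤ q j) :
    ∑ j, (√(p j) - √(q j)) ^ 2 = ∑ j, p j + ∑ j, q j - 2 * classFid p q := by
  rw [classFid, Finset.mul_sum, ← Finset.sum_add_distrib, ← Finset.sum_sub_distrib]
  refine Finset.sum_congr rfl fun j _ => ?_
  rw [Real.sqrt_mul (hp j), sub_sq, Real.sq_sqrt (hp j), Real.sq_sqrt (hq j)]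
  ring

theorem eq_of_one_le_classFid {n : ℕ} {p q : Fin n → ℝ} (hp : ∀ j, 0 ≤ p j)
    (hq : ∀ j, 0 ≤ q j) (hps : ∑ j, p j = 1) (hqs : ∑ j, q j = 1)
    (hF : 1 ≤ classFid p q) : p = q := by
  have hzero : ∑ j, (√(p j) - √(q j)) ^ 2 = 0 := by
    refine le_antisymm ?_ (by positivity)
    rw [sum_sq_sqrt_sub_sqrt hp hq, hps, hqs]
    linarith
  funext j
  have hj := (Finset.sum_eq_zero_iff_of_nonneg fun j _ => sq_nonneg _).mp hzero j
    (Finset.mem_univ j)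
  rw [← Real.sq_sqrt (hp j), ← Real.sq_sqrt (hq j),
    sub_eq_zero.mp ((pow_eq_zero_iff two_ne_zero).mp hj)]

theorem classFid_self {n : ℕ} {p : Fin n → ℝ} (hp : ∀ j, 0 ≤ p j) :
    classFid p p = ∑ j, p j :=
  Finset.sum_congr rfl fun j _ => Real.sqrt_mul_self (hp j)

theorem trace_mul_measChannel {d r : ℕ} (P : Fin r → Matrix (Fin d) (Fin d) ℂ)
    (X ρ : Matrix (Fin d) (Fin d) ℂ) :
    (X * measChannel P ρ).trace = (measChannel P X * ρ).trace := by
  simp only [measChannel, Finset.mul_sum, Finset.sum_mul, trace_sum]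
  refine Finset.sum_congr rfl fun i _ => ?_
  rw [← Matrix.mul_assoc, ← Matrix.mul_assoc, trace_mul_cycle, ← Matrix.mul_assoc]

theorem probAB_eq_probB_measChannel {d rA rB : ℕ} (P : Fin rA → Matrix (Fin d) (Fin d) ℂ)
    (Q : Fin rB → Matrix (Fin d) (Fin d) ℂ) (ρ : Matrix (Fin d) (Fin d) ℂ) :
    probAB P Q ρ = probB (fun j => measChannel P (Q j)) ρ :=
  funext fun j => congrArg Complex.re (trace_mul_measChannel P (Q j) ρ)

namespace IsProjObs

variable {d r : ℕ} {P : Fin r → Matrix (Fin d) (Fin d) ℂ}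

theorem measChannel_eq_self_iff (hP : IsProjObs P) (X : Matrix (Fin d) (Fin d) ℂ) :
    measChannel P X = X ↔ ∀ i, P i * X = X * P i := by
  obtain ⟨-, hidem, horth, hsum⟩ := hP
  constructor
  · intro hX i
    have hleft : P i * measChannel P X = P i * X * P i := by
      rw [measChannel, Finset.mul_sum, Finset.sum_eq_single i]
      · rw [← Matrix.mul_assoc, ← Matrix.mul_assoc, hidem]
      · intro k _ hk
        rw [← Matrix.mul_assoc, ← Matrix.mul_assoc, horth i k (Ne.symm hk), zero_mul, zero_mul]
      · simp
    have hright : measChannel P X * P i = P i * X * P i := by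
      rw [measChannel, Finset.sum_mul, Finset.sum_eq_single i]
      · rw [Matrix.mul_assoc, hidem]
      · intro k _ hk
        rw [Matrix.mul_assoc, horth k i hk, mul_zero]
      · simp
    rwa [← hright, hX] at hleft
  · intro hX
    calc measChannel P X = ∑ i, X * (P i * P i) := by
          simp only [measChannel, hX, Matrix.mul_assoc]
      _ = X := by simp only [hidem, ← Finset.mul_sum, hsum, mul_one]

theorem measChannel_one (hP : IsProjObs P) : measChannel P 1 = 1 :=
  (hP.measChannel_eq_self_iff 1).mpr fun i => by rw [mul_one, one_mul]

theorem isHermitian_measChannel (hP : IsProjObs P) {X : Matrix (Fin d) (Fin d) ℂ}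
    (hX : X.IsHermitian) : (measChannel P X).IsHermitian := by
  refine isSelfAdjoint_sum _ fun i _ => ?_
  have hterm := isHermitian_mul_mul_conjTranspose (P i) hX
  rwa [(hP.1 i).eq] at hterm

theorem isDensity_measChannel (hP : IsProjObs P) {ρ : Matrix (Fin d) (Fin d) ℂ}
    (hρ : IsDensity ρ) : IsDensity (measChannel P ρ) := by
  refine ⟨posSemidef_sum _ fun i _ => ?_, ?_⟩
  · simpa only [(hP.1 i).eq] using hρ.1.mul_mul_conjTranspose_same (P i)
  · rw [← one_mul (measChannel P ρ), trace_mul_measChannel, hP.measChannel_one, one_mul, hρ.2]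

theorem probB_nonneg (hP : IsProjObs P) {ρ : Matrix (Fin d) (Fin d) ℂ} (hρ : ρ.PosSemidef)
    (i : Fin r) : 0 ≤ probB P ρ i := by
  have htrace : (P i * ρ * (P i)ᴴ).trace = (P i * ρ).trace := by
    rw [(hP.1 i).eq, trace_mul_comm, ← Matrix.mul_assoc, hP.2.1 i]
  rw [probB, ← htrace]
  exact (Complex.nonneg_iff.mp (hρ.mul_mul_conjTranspose_same (P i)).trace_nonneg).1

theorem sum_probB (hP : IsProjObs P) {ρ : Matrix (Fin d) (Fin d) ℂ} (hρ : IsDensity ρ) :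
    ∑ i, probB P ρ i = 1 := by
  simp only [probB, ← Complex.re_sum, ← trace_sum, ← Finset.sum_mul, hP.2.2.2, one_mul, hρ.2,
    Complex.one_re]

end IsProjObs

theorem QF_eq_zero_iff {d rA rB : ℕ} {P : Fin rA → Matrix (Fin d) (Fin d) ℂ}
    {Q : Fin rB → Matrix (Fin d) (Fin d) ℂ} (hP : IsProjObs P) (hQ : IsProjObs Q) :
    QF P Q = 0 ↔ ∀ ρ, IsDensity ρ → probAB P Q ρ = probB Q ρ := by
  have hprobAB_nonneg {ρ} (hρ : IsDensity ρ) : ∀ j, 0 ≤ probAB P Q ρ j :=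
    hQ.probB_nonneg (hP.isDensity_measChannel hρ).1
  have hsum_probAB {ρ} (hρ : IsDensity ρ) : ∑ j, probAB P Q ρ j = 1 :=
    hQ.sum_probB (hP.isDensity_measChannel hρ)
  constructor
  · intro hQF ρ hρ
    have hbdd : BddAbove {x : ℝ | ∃ ρ, IsDensity ρ ∧
        x = 1 - (classFid (probAB P Q ρ) (probB Q ρ)) ^ 2} := by
      refine ⟨1, ?_⟩
      rintro _ ⟨σ, -, rfl⟩
      nlinarith
    have hle : 1 - classFid (probAB P Q ρ) (probB Q ρ) ^ 2 ≤ 0 :=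
      hQF ▸ le_csSup hbdd ⟨ρ, hρ, rfl⟩
    have hF_nonneg : 0 ≤ classFid (probAB P Q ρ) (probB Q ρ) :=
      Finset.sum_nonneg fun j _ => Real.sqrt_nonneg _
    exact eq_of_one_le_classFid (hprobAB_nonneg hρ) (hQ.probB_nonneg hρ.1) (hsum_probAB hρ)
      (hQ.sum_probB hρ) (by nlinarith)
  · intro h
    have hzero : ∀ x ∈ {x : ℝ | ∃ ρ, IsDensity ρ ∧
        x = 1 - (classFid (probAB P Q ρ) (probB Q ρ)) ^ 2}, x = 0 := by
      rintro _ ⟨ρ, hρ, rfl⟩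
      rw [h ρ hρ, classFid_self (hQ.probB_nonneg hρ.1), hQ.sum_probB hρ]
      norm_num
    exact le_antisymm (Real.sSup_nonpos fun x hx => (hzero x hx).le)
      (Real.sSup_nonneg fun x hx => (hzero x hx).ge)

theorem forall_isDensity_probAB_eq_probB_iff {d rA rB : ℕ}
    {P : Fin rA → Matrix (Fin d) (Fin d) ℂ} {Q : Fin rB → Matrix (Fin d) (Fin d) ℂ}
    (hP : IsProjObs P) (hQ : ∀ j, (Q j).IsHermitian) :
    (∀ ρ, IsDensity ρ → probAB P Q ρ = probB Q ρ) ↔ ∀ j, measChannel P (Q j) = Q j := by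
  simp only [probAB_eq_probB_measChannel]
  refine ⟨fun h j => ?_, fun h ρ _ => by simp only [h]⟩
  exact (hP.isHermitian_measChannel (hQ j)).eq_of_forall_isDensity (hQ j)
    fun ρ hρ => congrFun (h ρ hρ) j

theorem stmt_2_general {d rA rB : ℕ}
    (P : Fin rA → Matrix (Fin d) (Fin d) ℂ) (Q : Fin rB → Matrix (Fin d) (Fin d) ℂ)
    (hP : IsProjObs P) (hQ : IsProjObs Q) :
    QF P Q = 0 ↔ (∀ i j, P i * Q j = Q j * P i) := by
  rw [QF_eq_zero_iff hP hQ, forall_isDensity_probAB_eq_probB_iff hP hQ.1, forall_comm]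
  exact forall_congr' fun j => hP.measChannel_eq_self_iff (Q j)

theorem stmt_2 {d rA rB : ℕ} (hd : 0 < d)
    (P : Fin rA → Matrix (Fin d) (Fin d) ℂ) (Q : Fin rB → Matrix (Fin d) (Fin d) ℂ)
    (hP : IsProjObs P) (hQ : IsProjObs Q) :
    QF P Q = 0 ↔ (∀ i j, P i * Q j = Q j * P i) :=
  stmt_2_general P Q hP hQ

end
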